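/- Let V be a finite set of unit vectors in ℂⁿ such that for all distinct v,w ∈ V, |⟨v,w⟩| ∈ {0, α} for a fixed real α with 0 < α < 1, and suppose 2 − (n+1)α² > 0. Then |V| ≤ n(n+1)(1−α²)/(2−(n+1)α²). -/

import Mathlib

/-!
Write `x_{vw} = |⟨v, w⟩|²`, `N = |V|`, and let `P_v = v v*`. Two positivity statements about
arbitrary finite families of unit vectors drive the bound:

* `N² ≤ n ∑ x_{vw}`, which is `tr (X²) ≥ 0` for the traceless part `X = n F - N I` of the frame
  operator `F = ∑ P_v`;
* `4 (n+1) ∑ x_{vw} ≤ (n+1)(n+2) ∑ x_{vw}² + 2 N²`, which is `tr (X²) ≥ 0` for the traceless part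
  of `S = ∑ P_v ⊗ P_v` inside the symmetric square, obtained by subtracting from `S` suitable
  multiples of `(F ⊗ I + I ⊗ F)(I + W)` and `I + W`, `W` being the swap of tensor factors.

For a bi-angular set `x_{vw}² = α² x_{vw}` off the diagonal, so
`∑ x_{vw}² = α² ∑ x_{vw} + N (1 - α²)`, and eliminating `∑ x_{vw}` between the two inequalities
gives the bound.
-/

open Matrix Finset
open scoped InnerProductSpace Kronecker ComplexOrder

namespace Matrix

variable {m α : Type*}

lemma IsHermitian.kronecker {n : Type*} [CommSemiring α] [StarRing α] {A : Matrix n n α}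
    {B : Matrix m m α} (hA : A.IsHermitian) (hB : B.IsHermitian) : (A ⊗ₖ B).IsHermitian := by
  rw [IsHermitian, conjTranspose_kronecker, hA.eq, hB.eq]

lemma IsHermitian.trace_mul_self_nonneg {𝕜 : Type*} [RCLike 𝕜] [Fintype m] {X : Matrix m m 𝕜}
    (hX : X.IsHermitian) : 0 ≤ trace (X * X) := by
  simpa [hX.eq] using (posSemidef_conjTranspose_mul_self X).trace_nonneg

variable [DecidableEq m]

def swapMatrix [Zero α] [One α] : Matrix (m × m) (m × m) α :=
  (Equiv.prodComm m m).toPEquiv.toMatrix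

def kroneckerSumSymm [Fintype m] [CommSemiring α] (A : Matrix m m α) :
    Matrix (m × m) (m × m) α :=
  (A ⊗ₖ 1 + 1 ⊗ₖ A) * (1 + swapMatrix)

section CommSemiring

variable [Fintype m] [CommSemiring α]

lemma swapMatrix_mul (M : Matrix (m × m) (m × m) α) :
    swapMatrix * M = M.submatrix Prod.swap id :=
  PEquiv.toMatrix_toPEquiv_mul _ _

lemma mul_swapMatrix (M : Matrix (m × m) (m × m) α) :
    M * swapMatrix = M.submatrix id Prod.swap :=
  PEquiv.mul_toMatrix_toPEquiv _ _

lemma swapMatrix_mul_swapMatrix : (swapMatrix * swapMatrix : Matrix (m × m) (m × m) α) = 1 := by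
  rw [swapMatrix_mul]
  ext ⟨i, j⟩ ⟨k, l⟩
  simp [swapMatrix, one_apply, Prod.ext_iff]

lemma kronecker_mul_swapMatrix (A B : Matrix m m α) :
    A ⊗ₖ B * swapMatrix = swapMatrix * (B ⊗ₖ A) := by
  rw [swapMatrix_mul, mul_swapMatrix]
  ext ⟨i, j⟩ ⟨k, l⟩
  simp [mul_comm]

lemma trace_kronecker_mul_swapMatrix (A B : Matrix m m α) :
    trace (A ⊗ₖ B * swapMatrix) = trace (A * B) := by
  simp [mul_swapMatrix, trace, mul_apply, Fintype.sum_prod_type]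

lemma trace_swapMatrix : trace (swapMatrix : Matrix (m × m) (m × m) α) = Fintype.card m := by
  simpa using trace_kronecker_mul_swapMatrix (1 : Matrix m m α) 1

lemma one_add_swapMatrix_mul_self :
    ((1 + swapMatrix) * (1 + swapMatrix) : Matrix (m × m) (m × m) α) = 2 • (1 + swapMatrix) := by
  simp only [mul_add, add_mul, swapMatrix_mul_swapMatrix, one_mul, mul_one, two_smul]
  abel

lemma trace_one_add_swapMatrix_mul_self :
    trace ((1 + swapMatrix) * (1 + swapMatrix) : Matrix (m × m) (m × m) α)
      = 2 * Fintype.card m * (Fintype.card m + 1) := by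
  rw [one_add_swapMatrix_mul_self, trace_smul, trace_add, trace_one, trace_swapMatrix,
    Fintype.card_prod, nsmul_eq_mul]
  push_cast
  ring

lemma one_add_swapMatrix_commute_kroneckerSum (A : Matrix m m α) :
    Commute (1 + swapMatrix) (A ⊗ₖ 1 + 1 ⊗ₖ A) := by
  refine (Commute.one_left _).add_left ?_
  rw [Commute, SemiconjBy, mul_add, add_mul, kronecker_mul_swapMatrix, kronecker_mul_swapMatrix,
    add_comm]

lemma trace_kroneckerSumSymm_mul_one_add_swapMatrix (A : Matrix m m α) :
    trace (kroneckerSumSymm A * (1 + swapMatrix)) = 4 * (Fintype.card m + 1) * trace A := by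
  rw [kroneckerSumSymm, mul_assoc, one_add_swapMatrix_mul_self, mul_smul_comm, trace_smul,
    nsmul_eq_mul]
  simp only [mul_add, add_mul, mul_one, trace_add, trace_kronecker, trace_kronecker_mul_swapMatrix,
    trace_one, one_mul]
  push_cast
  ring

lemma trace_kroneckerSumSymm_mul_self (A : Matrix m m α) :
    trace (kroneckerSumSymm A * kroneckerSumSymm A)
      = 4 * ((Fintype.card m + 2) * trace (A * A) + trace A ^ 2) := by
  rw [kroneckerSumSymm, mul_assoc, ← mul_assoc (1 + swapMatrix),
    (one_add_swapMatrix_commute_kroneckerSum A).eq, mul_assoc, one_add_swapMatrix_mul_self,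
    ← mul_assoc, mul_smul_comm, trace_smul, nsmul_eq_mul]
  simp only [mul_add, add_mul, ← mul_kronecker_mul, mul_one, one_mul, trace_add, trace_kronecker,
    trace_kronecker_mul_swapMatrix, trace_one]
  push_cast
  ring

lemma trace_kronecker_self_mul_kroneckerSumSymm {P : Matrix m m α} (hP : P * P = P)
    (htr : trace P = 1) (A : Matrix m m α) :
    trace (P ⊗ₖ P * kroneckerSumSymm A) = 4 * trace (P * A) := by
  simp only [kroneckerSumSymm, mul_add, add_mul, mul_one, ← mul_assoc, ← mul_kronecker_mul,
    trace_add, trace_kronecker, trace_kronecker_mul_swapMatrix, htr]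
  rw [trace_mul_comm (P * A) P, ← mul_assoc, hP]
  ring

lemma trace_mul_self_smul_add_smul_add_smul (a b c : α) (S T U : Matrix m m α) :
    trace ((a • S + b • T + c • U) * (a • S + b • T + c • U))
      = a ^ 2 * trace (S * S) + b ^ 2 * trace (T * T) + c ^ 2 * trace (U * U)
        + 2 * a * b * trace (S * T) + 2 * a * c * trace (S * U) + 2 * b * c * trace (T * U) := by
  simp only [add_mul, mul_add, smul_mul_smul_comm, trace_add, trace_smul, smul_eq_mul]
  rw [trace_mul_comm T S, trace_mul_comm U S, trace_mul_comm U T]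
  ring

end CommSemiring

lemma conjTranspose_swapMatrix [Semiring α] [StarRing α] :
    (swapMatrix : Matrix (m × m) (m × m) α)ᴴ = swapMatrix := by
  ext ⟨i, j⟩ ⟨k, l⟩
  simp [swapMatrix, Prod.ext_iff, and_comm, apply_ite star, eq_comm]

lemma isHermitian_one_add_swapMatrix [Semiring α] [StarRing α] :
    (1 + swapMatrix : Matrix (m × m) (m × m) α).IsHermitian := by
  simp [IsHermitian, conjTranspose_swapMatrix]

lemma IsHermitian.kroneckerSumSymm [Fintype m] [CommSemiring α] [StarRing α] {A : Matrix m m α}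
    (hA : A.IsHermitian) : (kroneckerSumSymm A).IsHermitian := by
  rw [IsHermitian, Matrix.kroneckerSumSymm, conjTranspose_mul, isHermitian_one_add_swapMatrix.eq,
    conjTranspose_add, (hA.kronecker isHermitian_one).eq, (isHermitian_one.kronecker hA).eq]
  exact (one_add_swapMatrix_commute_kroneckerSum A).eq

end Matrix

variable {𝕜 ι : Type*} [RCLike 𝕜]

def selfOuter (v : EuclideanSpace 𝕜 ι) : Matrix ι ι 𝕜 := vecMulVec v.ofLp (star v.ofLp)

def frameOperator (V : Finset (EuclideanSpace 𝕜 ι)) : Matrix ι ι 𝕜 := ∑ v ∈ V, selfOuter v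

def kroneckerFrameOperator (V : Finset (EuclideanSpace 𝕜 ι)) : Matrix (ι × ι) (ι × ι) 𝕜 :=
  ∑ v ∈ V, selfOuter v ⊗ₖ selfOuter v

lemma isHermitian_selfOuter (v : EuclideanSpace 𝕜 ι) : (selfOuter v).IsHermitian := by
  simp [IsHermitian, selfOuter, conjTranspose_vecMulVec]

lemma isHermitian_frameOperator (V : Finset (EuclideanSpace 𝕜 ι)) :
    (frameOperator V).IsHermitian :=
  isSelfAdjoint_sum V fun v _ => isHermitian_selfOuter v

lemma isHermitian_kroneckerFrameOperator (V : Finset (EuclideanSpace 𝕜 ι)) :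
    (kroneckerFrameOperator V).IsHermitian :=
  isSelfAdjoint_sum V fun v _ => (isHermitian_selfOuter v).kronecker (isHermitian_selfOuter v)

variable [Fintype ι]

lemma selfOuter_mul_selfOuter (v w : EuclideanSpace 𝕜 ι) :
    selfOuter v * selfOuter w = ⟪v, w⟫_𝕜 • vecMulVec v.ofLp (star w.ofLp) := by
  rw [selfOuter, selfOuter, vecMulVec_mul_vecMulVec, vecMulVec_smul,
    EuclideanSpace.inner_eq_star_dotProduct, dotProduct_comm]

lemma trace_selfOuter_mul_selfOuter (v w : EuclideanSpace 𝕜 ι) :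
    trace (selfOuter v * selfOuter w) = ((‖⟪v, w⟫_𝕜‖ ^ 2 : ℝ) : 𝕜) := by
  rw [selfOuter_mul_selfOuter, trace_smul, trace_vecMulVec,
    ← EuclideanSpace.inner_eq_star_dotProduct, smul_eq_mul, ← inner_conj_symm w v,
    RCLike.mul_conj]
  norm_cast

lemma trace_selfOuter (v : EuclideanSpace 𝕜 ι) : trace (selfOuter v) = ((‖v‖ ^ 2 : ℝ) : 𝕜) := by
  rw [selfOuter, trace_vecMulVec, ← EuclideanSpace.inner_eq_star_dotProduct,
    inner_self_eq_norm_sq_to_K]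
  norm_cast

lemma selfOuter_mul_self_of_norm_eq_one {v : EuclideanSpace 𝕜 ι} (hv : ‖v‖ = 1) :
    selfOuter v * selfOuter v = selfOuter v := by
  rw [selfOuter_mul_selfOuter, inner_self_eq_norm_sq_to_K, hv]
  simp [selfOuter]

section FrameOperator

variable {V : Finset (EuclideanSpace 𝕜 ι)}

lemma trace_frameOperator (hV : ∀ v ∈ V, ‖v‖ = 1) : trace (frameOperator V) = #V := by
  simp +contextual [frameOperator, trace_sum, trace_selfOuter, hV]

lemma trace_frameOperator_mul_self (V : Finset (EuclideanSpace 𝕜 ι)) :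
    trace (frameOperator V * frameOperator V)
      = ((∑ v ∈ V, ∑ w ∈ V, ‖⟪v, w⟫_𝕜‖ ^ 2 : ℝ) : 𝕜) := by
  rw [frameOperator, Finset.sum_mul]
  simp_rw [Finset.mul_sum, trace_sum, trace_selfOuter_mul_selfOuter]
  push_cast
  rfl

lemma trace_kroneckerFrameOperator_mul_self (V : Finset (EuclideanSpace 𝕜 ι)) :
    trace (kroneckerFrameOperator V * kroneckerFrameOperator V)
      = ((∑ v ∈ V, ∑ w ∈ V, ‖⟪v, w⟫_𝕜‖ ^ 4 : ℝ) : 𝕜) := by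
  rw [kroneckerFrameOperator, Finset.sum_mul]
  simp_rw [Finset.mul_sum, trace_sum, ← mul_kronecker_mul, trace_kronecker,
    trace_selfOuter_mul_selfOuter]
  push_cast
  ring_nf

variable [DecidableEq ι]

lemma trace_kroneckerFrameOperator_mul_one_add_swapMatrix (hV : ∀ v ∈ V, ‖v‖ = 1) :
    trace (kroneckerFrameOperator V * (1 + swapMatrix : Matrix (ι × ι) (ι × ι) 𝕜)) = 2 * #V := by
  rw [kroneckerFrameOperator, Finset.sum_mul, trace_sum]
  calc _ = ∑ v ∈ V, (2 : 𝕜) := Finset.sum_congr rfl fun v hv => by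
        rw [mul_add, mul_one, trace_add, trace_kronecker, trace_kronecker_mul_swapMatrix,
          selfOuter_mul_self_of_norm_eq_one (hV v hv), trace_selfOuter, hV v hv]
        norm_num
    _ = _ := by simp [mul_comm]

lemma trace_kroneckerFrameOperator_mul_kroneckerSumSymm (hV : ∀ v ∈ V, ‖v‖ = 1) :
    trace (kroneckerFrameOperator V * kroneckerSumSymm (frameOperator V))
      = 4 * trace (frameOperator V * frameOperator V) := by
  rw [kroneckerFrameOperator, Finset.sum_mul, trace_sum]
  calc _ = ∑ v ∈ V, 4 * trace (selfOuter v * frameOperator V) :=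
        Finset.sum_congr rfl fun v hv => trace_kronecker_self_mul_kroneckerSumSymm
          (selfOuter_mul_self_of_norm_eq_one (hV v hv)) (by simp [trace_selfOuter, hV v hv]) _
    _ = _ := by rw [← Finset.mul_sum, ← trace_sum, ← Finset.sum_mul, frameOperator]

end FrameOperator

theorem card_sq_le_card_mul_sum_norm_inner_sq {V : Finset (EuclideanSpace 𝕜 ι)}
    (hV : ∀ v ∈ V, ‖v‖ = 1) :
    (#V : ℝ) ^ 2 ≤ Fintype.card ι * ∑ v ∈ V, ∑ w ∈ V, ‖⟪v, w⟫_𝕜‖ ^ 2 := by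
  classical
  set n := Fintype.card ι
  rcases n.eq_zero_or_pos with hn | hn
  · have : IsEmpty ι := Fintype.card_eq_zero_iff.mp hn
    have hV0 : (#V : 𝕜) = 0 := by simp [← trace_frameOperator hV, trace]
    simp_all
  set X := (n : 𝕜) • frameOperator V + (-(#V : 𝕜)) • 1
  have hX : X.IsHermitian :=
    ((isHermitian_frameOperator V).smul (.natCast n)).add
      (isHermitian_one.smul (IsSelfAdjoint.natCast _).neg)
  have htr : trace (X * X)
      = ((n * (n * ∑ v ∈ V, ∑ w ∈ V, ‖⟪v, w⟫_𝕜‖ ^ 2 - #V ^ 2) : ℝ) : 𝕜) := by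
    simp only [X, add_mul, mul_add, smul_mul_smul_comm, mul_one, one_mul, trace_add, trace_smul,
      trace_one, smul_eq_mul, trace_frameOperator_mul_self, trace_frameOperator hV]
    push_cast
    ring
  have hpos := hX.trace_mul_self_nonneg
  rw [htr, RCLike.ofReal_nonneg] at hpos
  linarith [(mul_nonneg_iff_of_pos_left (by exact_mod_cast hn : (0 : ℝ) < n)).mp hpos]

theorem four_mul_sum_norm_inner_sq_le [DecidableEq ι] {V : Finset (EuclideanSpace 𝕜 ι)}
    (hV : ∀ v ∈ V, ‖v‖ = 1) :
    4 * (Fintype.card ι + 1) * ∑ v ∈ V, ∑ w ∈ V, ‖⟪v, w⟫_𝕜‖ ^ 2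
      ≤ (Fintype.card ι + 1) * (Fintype.card ι + 2) * ∑ v ∈ V, ∑ w ∈ V, ‖⟪v, w⟫_𝕜‖ ^ 4
        + 2 * #V ^ 2 := by
  set n := Fintype.card ι
  set X := (((n + 1) * (n + 2) : ℕ) : 𝕜) • kroneckerFrameOperator V
    + (-((n + 1 : ℕ) : 𝕜)) • kroneckerSumSymm (frameOperator V) + (#V : 𝕜) • (1 + swapMatrix)
  have hX : X.IsHermitian :=
    (((isHermitian_kroneckerFrameOperator V).smul (.natCast _)).add
      ((isHermitian_frameOperator V).kroneckerSumSymm.smul (IsSelfAdjoint.natCast _).neg)).add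
      (isHermitian_one_add_swapMatrix.smul (.natCast _))
  have htr : trace (X * X) = (((n + 1) * (n + 2) * ((n + 1) * (n + 2) *
      ∑ v ∈ V, ∑ w ∈ V, ‖⟪v, w⟫_𝕜‖ ^ 4 - 4 * (n + 1) * ∑ v ∈ V, ∑ w ∈ V, ‖⟪v, w⟫_𝕜‖ ^ 2
        + 2 * #V ^ 2) : ℝ) : 𝕜) := by
    rw [trace_mul_self_smul_add_smul_add_smul, trace_kroneckerFrameOperator_mul_self,
      trace_kroneckerSumSymm_mul_self, trace_one_add_swapMatrix_mul_self,
      trace_kroneckerFrameOperator_mul_kroneckerSumSymm hV,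
      trace_kroneckerFrameOperator_mul_one_add_swapMatrix hV,
      trace_kroneckerSumSymm_mul_one_add_swapMatrix, trace_frameOperator_mul_self,
      trace_frameOperator hV]
    push_cast
    ring
  have hpos := hX.trace_mul_self_nonneg
  rw [htr, RCLike.ofReal_nonneg] at hpos
  linarith [(mul_nonneg_iff_of_pos_left (by positivity : (0 : ℝ) < (n + 1) * (n + 2))).mp hpos]

theorem sum_norm_inner_pow_four_eq_of_biangular {E : Type*} [NormedAddCommGroup E]
    [InnerProductSpace 𝕜 E] {α : ℝ} {V : Finset E} (hV : ∀ v ∈ V, ‖v‖ = 1)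
    (hangle : ∀ v ∈ V, ∀ w ∈ V, v ≠ w → ‖⟪v, w⟫_𝕜‖ = 0 ∨ ‖⟪v, w⟫_𝕜‖ = α) :
    ∑ v ∈ V, ∑ w ∈ V, ‖⟪v, w⟫_𝕜‖ ^ 4
      = α ^ 2 * ∑ v ∈ V, ∑ w ∈ V, ‖⟪v, w⟫_𝕜‖ ^ 2 + #V * (1 - α ^ 2) := by
  have hrow : ∀ v ∈ V, ∑ w ∈ V, (‖⟪v, w⟫_𝕜‖ ^ 4 - α ^ 2 * ‖⟪v, w⟫_𝕜‖ ^ 2) = 1 - α ^ 2 := by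
    intro v hv
    rw [Finset.sum_eq_single_of_mem v hv]
    · simp [inner_self_eq_norm_sq_to_K, hV v hv]
    · intro w hw hwv
      rcases hangle v hv w hw (Ne.symm hwv) with h | h <;> rw [h] <;> ring
  have := Finset.sum_congr rfl hrow
  simp only [Finset.sum_sub_distrib, ← Finset.mul_sum, Finset.sum_const, nsmul_eq_mul] at this
  linarith

theorem stmt_4 {n : ℕ} (α : ℝ) (hα : 0 < α) (hα1 : α < 1)
    (V : Finset (EuclideanSpace ℂ (Fin n)))
    (hunit : ∀ v ∈ V, ‖v‖ = 1)
    (hangle : ∀ v ∈ V, ∀ w ∈ V, v ≠ w →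
      ‖(⟪v, w⟫_ℂ : ℂ)‖ = 0 ∨ ‖(⟪v, w⟫_ℂ : ℂ)‖ = α)
    (hden : 0 < 2 - (n + 1) * α ^ 2) :
    (V.card : ℝ) ≤ n * (n + 1) * (1 - α ^ 2) / (2 - (n + 1) * α ^ 2) := by
  have h1 := card_sq_le_card_mul_sum_norm_inner_sq hunit
  have h2 := four_mul_sum_norm_inner_sq_le hunit
  rw [sum_norm_inner_pow_four_eq_of_biangular hunit hangle] at h2
  simp only [Fintype.card_fin] at h1 h2
  have hα2 : α ^ 2 < 1 := by nlinarith
  have hcoef : 0 ≤ (n + 1) * (4 - (n + 2) * α ^ 2) := by nlinarith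
  have key : (n + 2) * #V * (#V * (2 - (n + 1) * α ^ 2))
      ≤ (n + 2) * #V * (n * (n + 1) * (1 - α ^ 2)) := by
    nlinarith [mul_le_mul_of_nonneg_left h1 hcoef, mul_le_mul_of_nonneg_left h2 n.cast_nonneg]
  rw [le_div_iff₀ hden]
  rcases V.eq_empty_or_nonempty with rfl | hne
  · simp only [card_empty, Nat.cast_zero, zero_mul]
    have : (0 : ℝ) ≤ 1 - α ^ 2 := by linarith
    positivity
  · exact le_of_mul_le_mul_left key (by positivity)
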